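/- arXiv:1504.08351 — 2 statements merged into one kernel-verified Lean document; each statement's English description precedes it below -/
import Mathlib

section
/- Let V be a real inner product space with a compatible complex structure J (orthogonal with J² = -id), and let v, w ∈ V be nonzero. Suppose that for every u ∈ V, ⟨Jv, u⟩ w - ⟨Jw, u⟩ v + ⟨v, u⟩ Jw - ⟨w, u⟩ Jv = 0. Then span_ℝ{v, Jv} = span_ℝ{w, Jw}. -/
open RealInnerProductSpace

/-- **The pointwise linear-algebra core of Theorem 4.1(2).**  Let `V` be a real
inner product space with a compatible complex structure `J` (orthogonal, with
`J² = -id`), and let `v, w ∈ V` be nonzero.  If for every `u ∈ V`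
`⟪Jv, u⟫ w - ⟪Jw, u⟫ v + ⟪v, u⟫ Jw - ⟪w, u⟫ Jv = 0`,
then `span_ℝ{v, Jv} = span_ℝ{w, Jw}`. -/
theorem span_v_Jv_eq_span_w_Jw
    {V : Type*} [NormedAddCommGroup V] [InnerProductSpace ℝ V]
    (J : V →ₗ[ℝ] V)
    (hJ2 : ∀ x, J (J x) = -x)
    (hJorth : ∀ a b, ⟪J a, J b⟫ = ⟪a, b⟫)
    (v w : V) (hv : v ≠ 0) (hw : w ≠ 0)
    (h : ∀ u : V, ⟪J v, u⟫ • w - ⟪J w, u⟫ • v + ⟪v, u⟫ • J w - ⟪w, u⟫ • J v = 0) :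
    Submodule.span ℝ ({v, J v} : Set V) = Submodule.span ℝ ({w, J w} : Set V) := by
  -- ⟪J x, x⟫ = 0
  have hskew : ∀ x : V, ⟪J x, x⟫ = 0 := by
    intro x
    have h1 := hJorth (J x) x
    rw [hJ2 x] at h1
    rw [inner_neg_left, real_inner_comm (J x) x] at h1
    linarith
  -- helper: if ⟪a,a⟫ • z = c • a + d • J a then z ∈ span {a, J a}
  have mem_of_comb : ∀ (a z : V) (c d : ℝ), a ≠ 0 →
      (⟪a, a⟫ : ℝ) • z = c • a + d • J a → z ∈ Submodule.span ℝ ({a, J a} : Set V) := by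
    intro a z c d ha heq
    have hne : (⟪a, a⟫ : ℝ) ≠ 0 := by
      exact (inner_self_ne_zero (𝕜 := ℝ)).mpr ha
    have hz : z = (⟪a, a⟫ : ℝ)⁻¹ • (c • a + d • J a) := by
      rw [← heq, smul_smul, inv_mul_cancel₀ hne, one_smul]
    rw [hz]
    have ha1 : a ∈ Submodule.span ℝ ({a, J a} : Set V) :=
      Submodule.subset_span (by simp)
    have ha2 : J a ∈ Submodule.span ℝ ({a, J a} : Set V) :=
      Submodule.subset_span (by simp)
    exact Submodule.smul_mem _ _ (Submodule.add_mem _ (Submodule.smul_mem _ _ ha1)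
      (Submodule.smul_mem _ _ ha2))
  -- J w ∈ span {v, J v}  (take u = v)
  have hJw : J w ∈ Submodule.span ℝ ({v, J v} : Set V) := by
    have hv0 := h v
    rw [hskew v] at hv0
    apply mem_of_comb v (J w) ⟪J w, v⟫ ⟪w, v⟫ hv
    have : (⟪v, v⟫ : ℝ) • J w = ⟪J w, v⟫ • v + ⟪w, v⟫ • J v := by
      have := hv0
      simp only [zero_smul, zero_sub] at this
      linear_combination (norm := module) this
    rw [this]
  -- J v ∈ span {w, J w}  (take u = w)
  have hJv : J v ∈ Submodule.span ℝ ({w, J w} : Set V) := by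
    have hw0 := h w
    rw [hskew w] at hw0
    apply mem_of_comb w (J v) ⟪J v, w⟫ ⟪v, w⟫ hw
    have : (⟪w, w⟫ : ℝ) • J v = ⟪J v, w⟫ • w + ⟪v, w⟫ • J w := by
      linear_combination (norm := module) -hw0
    rw [this]
  -- spans are J-invariant in the needed sense
  have hw_mem : w ∈ Submodule.span ℝ ({v, J v} : Set V) := by
    -- w = -J (J w); J maps span{v,Jv} to itself
    have hJinv : ∀ z ∈ Submodule.span ℝ ({v, J v} : Set V),
        J z ∈ Submodule.span ℝ ({v, J v} : Set V) := by
      intro z hz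
      induction hz using Submodule.span_induction with
      | mem x hx =>
        rcases hx with rfl | hx
        · exact Submodule.subset_span (by simp)
        · simp only [Set.mem_singleton_iff] at hx
          subst hx
          rw [hJ2]
          exact Submodule.neg_mem _ (Submodule.subset_span (by simp))
      | zero => simp
      | add x y _ _ hx hy => rw [map_add]; exact Submodule.add_mem _ hx hy
      | smul c x _ hx => rw [map_smul]; exact Submodule.smul_mem _ _ hx
    have := hJinv _ hJw
    rw [hJ2] at this
    simpa using Submodule.neg_mem _ this
  have hv_mem : v ∈ Submodule.span ℝ ({w, J w} : Set V) := by
    have hJinv : ∀ z ∈ Submodule.span ℝ ({w, J w} : Set V),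
        J z ∈ Submodule.span ℝ ({w, J w} : Set V) := by
      intro z hz
      induction hz using Submodule.span_induction with
      | mem x hx =>
        rcases hx with rfl | hx
        · exact Submodule.subset_span (by simp)
        · simp only [Set.mem_singleton_iff] at hx
          subst hx
          rw [hJ2]
          exact Submodule.neg_mem _ (Submodule.subset_span (by simp))
      | zero => simp
      | add x y _ _ hx hy => rw [map_add]; exact Submodule.add_mem _ hx hy
      | smul c x _ hx => rw [map_smul]; exact Submodule.smul_mem _ _ hx
    have := hJinv _ hJv
    rw [hJ2] at this
    simpa using Submodule.neg_mem _ this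
  apply le_antisymm
  · rw [Submodule.span_le]
    intro x hx
    rcases hx with rfl | hx
    · exact hv_mem
    · simp only [Set.mem_singleton_iff] at hx; subst hx; exact hJv
  · rw [Submodule.span_le]
    intro x hx
    rcases hx with rfl | hx
    · exact hw_mem
    · simp only [Set.mem_singleton_iff] at hx; subst hx; exact hJw
end

section
/- Let f, ℓ be smooth real functions of τ on an interval with ℓ > 0, τ > 0, and let k, c, C be constants. Suppose (f∘ℓ)' - k ℓ'/ℓ = C/(τ(τ-2c)) and (f∘ℓ)'' - k ℓ''/ℓ + 2((f∘ℓ)' - k ℓ'/ℓ)/τ = 0 hold on the interval (primes denoting d/dτ, τ ≠ 0, τ ≠ 2c). Then k (ℓ')²/ℓ² = -2cC/(τ²(τ-2c)²). In particular, if c = 0 and k ≠ 0, then ℓ is constant and C = 0. -/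
/-- **The final computation in the proof of Theorem 7.3.**  On an open interval
`I ⊆ (0,∞)` avoiding `2c`, suppose the positive twice differentiable function `ℓ`
and the function `f` satisfy (primes denoting `d/dτ`):
`(f∘ℓ)' - k ℓ'/ℓ = C/(τ(τ-2c))` and
`(f∘ℓ)'' - k ℓ''/ℓ + 2((f∘ℓ)' - k ℓ'/ℓ)/τ = 0`.
Then `k (ℓ')²/ℓ² = -2cC/(τ²(τ-2c)²)` on `I`.  In particular, if `c = 0` and
`k ≠ 0`, then `ℓ` is constant on `I` and `C = 0`. -/
theorem ell_computation_quasi_soliton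
    (a b k c C : ℝ) (I : Set ℝ) (hI : I = Set.Ioo a b) (hab : a < b)
    (hpos : ∀ t ∈ I, 0 < t) (h2c : ∀ t ∈ I, t ≠ 2 * c)
    (f ℓ : ℝ → ℝ)
    (hℓpos : ∀ t ∈ I, 0 < ℓ t)
    (hℓdiff : ∀ t ∈ I, DifferentiableAt ℝ ℓ t)
    (hℓ'diff : ∀ t ∈ I, DifferentiableAt ℝ (deriv ℓ) t)
    (hfℓdiff : ∀ t ∈ I, DifferentiableAt ℝ (f ∘ ℓ) t)
    (hfℓ'diff : ∀ t ∈ I, DifferentiableAt ℝ (deriv (f ∘ ℓ)) t)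
    (h1 : ∀ t ∈ I, deriv (f ∘ ℓ) t - k * deriv ℓ t / ℓ t = C / (t * (t - 2 * c)))
    (h2 : ∀ t ∈ I, deriv (deriv (f ∘ ℓ)) t - k * deriv (deriv ℓ) t / ℓ t
            + 2 * (deriv (f ∘ ℓ) t - k * deriv ℓ t / ℓ t) / t = 0) :
    (∀ t ∈ I, k * (deriv ℓ t) ^ 2 / (ℓ t) ^ 2
        = -2 * c * C / (t ^ 2 * (t - 2 * c) ^ 2)) ∧
    (c = 0 → k ≠ 0 → (∀ t ∈ I, ∀ t' ∈ I, ℓ t = ℓ t') ∧ C = 0) := by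
  subst hI
  have hIopen : IsOpen (Set.Ioo a b) := isOpen_Ioo
  have key : ∀ t ∈ Set.Ioo a b, k * (deriv ℓ t) ^ 2 / (ℓ t) ^ 2
      = -2 * c * C / (t ^ 2 * (t - 2 * c) ^ 2) := by
    intro t ht
    have ht0 : t ≠ 0 := (hpos t ht).ne'
    have htc : t - 2 * c ≠ 0 := sub_ne_zero.2 (h2c t ht)
    have hℓt : ℓ t ≠ 0 := (hℓpos t ht).ne'
    have hden : t * (t - 2 * c) ≠ 0 := mul_ne_zero ht0 htc
    -- derivative of LHS of h1
    have hL : deriv (fun s => deriv (f ∘ ℓ) s - k * deriv ℓ s / ℓ s) t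
        = deriv (deriv (f ∘ ℓ)) t
          - (k * deriv (deriv ℓ) t * ℓ t - k * deriv ℓ t * deriv ℓ t) / (ℓ t) ^ 2 := by
      rw [deriv_fun_sub (hfℓ'diff t ht) (((hℓ'diff t ht).const_mul k).fun_div (hℓdiff t ht) hℓt),
        deriv_fun_div ((hℓ'diff t ht).const_mul k) (hℓdiff t ht) hℓt,
        deriv_const_mul k (hℓ'diff t ht)]
    -- derivative of RHS of h1
    have hdenD : HasDerivAt (fun s => s * (s - 2 * c)) (1 * (t - 2 * c) + t * 1) t :=
      (hasDerivAt_id t).mul ((hasDerivAt_id t).sub_const _)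
    have hR : deriv (fun s => C / (s * (s - 2 * c))) t
        = (0 * (t * (t - 2 * c)) - C * (1 * (t - 2 * c) + t * 1)) / (t * (t - 2 * c)) ^ 2 :=
      ((hasDerivAt_const t C).div hdenD hden).deriv
    have heq : deriv (fun s => deriv (f ∘ ℓ) s - k * deriv ℓ s / ℓ s) t
        = deriv (fun s => C / (s * (s - 2 * c))) t := by
      apply Filter.EventuallyEq.deriv_eq
      exact Filter.eventuallyEq_of_mem (hIopen.mem_nhds ht) h1
    rw [hL, hR] at heq
    have e2 := h2 t ht
    rw [h1 t ht] at e2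
    field_simp at heq e2 ⊢
    linear_combination heq - (ℓ t * (t - 2 * c)) * e2
  refine ⟨key, fun hc hk => ?_⟩
  subst hc
  have hd0 : ∀ t ∈ Set.Ioo a b, deriv ℓ t = 0 := by
    intro t ht
    have hkey := key t ht
    have hz : k * (deriv ℓ t) ^ 2 / (ℓ t) ^ 2 = 0 := by rw [hkey]; ring
    have hℓt : (ℓ t) ^ 2 ≠ 0 := pow_ne_zero _ (hℓpos t ht).ne'
    have : k * (deriv ℓ t) ^ 2 = 0 := by
      rwa [div_eq_zero_iff, or_iff_left hℓt] at hz
    rcases mul_eq_zero.1 this with h | h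
    · exact absurd h hk
    · exact pow_eq_zero_iff (n := 2) two_ne_zero |>.1 h
  have hconst : ∀ t ∈ Set.Ioo a b, ∀ t' ∈ Set.Ioo a b, ℓ t = ℓ t' := by
    intro t ht t' ht'
    apply (convex_Ioo a b).is_const_of_fderivWithin_eq_zero
      (fun x hx => (hℓdiff x hx).differentiableWithinAt) (fun x hx => ?_) ht ht'
    have h0 : HasDerivAt ℓ 0 x := hd0 x hx ▸ (hℓdiff x hx).hasDerivAt
    rw [fderivWithin_of_isOpen hIopen hx, h0.hasFDerivAt.fderiv]
    ext
    simp
  refine ⟨hconst, ?_⟩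
  set t := (a + b) / 2 with htdef
  have ht : t ∈ Set.Ioo a b := ⟨by linarith, by linarith⟩
  have hfc : deriv (f ∘ ℓ) t = 0 := by
    have hev : (f ∘ ℓ) =ᶠ[nhds t] fun _ => (f ∘ ℓ) t := by
      filter_upwards [hIopen.mem_nhds ht] with x hx
      simp only [Function.comp]
      rw [hconst x hx t ht]
    rw [hev.deriv_eq, deriv_const]
  have := h1 t ht
  rw [hfc, hd0 t ht] at this
  have ht0 : t ≠ 0 := (hpos t ht).ne'
  field_simp at this
  simpa [ht0] using this.symm
end
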